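/- Let (f⁰, f¹) : X → Y be a morphism in F^mp(A; ω) (d⁰ injective, X¹, Y¹ projective components). Then Cok⁰(f⁰, f¹) = 0 if and only if (f⁰, f¹) factors through θ⁰(P) for some projective A-module P. -/

import Mathlib

/-!
Both directions come from the fact that `θ⁰(M)` has `d⁰ = id`, so every morphism
`v : θ⁰(M) → Y` satisfies `v¹ = d⁰_Y ∘ v⁰`. Hence a morphism factoring through some `θ⁰(P)`
has `im f¹ ⊆ im d⁰_Y`. Conversely, `X` maps to `θ⁰(X¹)` by `(d⁰_X, id)`; if `im f¹ ⊆ im d⁰_Y`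
and `d⁰_Y` is injective, then `f¹ = d⁰_Y ∘ g` for a linear `g : X¹ → Y⁰`, and `(g, d⁰_Y ∘ g)` is a
morphism `θ⁰(X¹) → Y` through which `f` factors.
-/

universe u v

/-- A module factorization `X = (X⁰, X¹; d⁰, d¹)` of `ω` over `A`: `d⁰ : X⁰ → X¹` is
`A`-linear and `d¹ : X¹ → ᵗ(X⁰)` is `A`-linear, i.e. `d¹ : X¹ → X⁰` is
`σ`-semilinear, with `d¹ ∘ d⁰ = ω_{X⁰}` and `ᵗ(d⁰) ∘ d¹ = ω_{X¹}`. -/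
structure MFact (A : Type u) [Ring A] (ω : A) (σ : A ≃+* A) : Type (max u (v + 1)) where
  X0 : ModuleCat.{v} A
  X1 : ModuleCat.{v} A
  d0 : X0 →ₗ[A] X1
  d1 : X1 →ₛₗ[(σ : A →+* A)] X0
  comp01 : ∀ x : X0, d1 (d0 x) = ω • x
  comp10 : ∀ x : X1, d0 (d1 x) = ω • x

variable {A : Type u} [Ring A] {ω : A} {σ : A ≃+* A}

/-- A morphism of module factorizations. -/
@[ext] structure MFactHom (X Y : MFact.{u, v} A ω σ) where
  f0 : X.X0 →ₗ[A] Y.X0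
  f1 : X.X1 →ₗ[A] Y.X1
  comm0 : ∀ x : X.X0, f1 (X.d0 x) = Y.d0 (f0 x)
  comm1 : ∀ x : X.X1, f0 (X.d1 x) = Y.d1 (f1 x)

/-- Composition of morphisms of module factorizations. -/
def MFactHom.comp {X Y Z : MFact.{u, v} A ω σ} (g : MFactHom Y Z) (f : MFactHom X Y) :
    MFactHom X Z where
  f0 := g.f0 ∘ₗ f.f0
  f1 := g.f1 ∘ₗ f.f1
  comm0 := fun x => by
    simp only [LinearMap.comp_apply, f.comm0 x, g.comm0 (f.f0 x)]
  comm1 := fun x => by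
    simp only [LinearMap.comp_apply, f.comm1 x, g.comm1 (f.f1 x)]

variable (ω σ)

/-- The trivial module factorization `θ⁰(M) = (M, M; Id_M, ω_M)`. -/
def theta0 (hσ : ∀ a : A, ω * a = σ a * ω)
    (M : Type v) [AddCommGroup M] [Module A M] : MFact.{u, v} A ω σ where
  X0 := ModuleCat.of A M
  X1 := ModuleCat.of A M
  d0 := LinearMap.id
  d1 :=
    { toFun := fun m => ω • m
      map_add' := fun x y => smul_add ω x y
      map_smul' := fun a m => by
        simp only [RingHom.coe_coe]
        rw [smul_smul, smul_smul, hσ] }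
  comp01 := fun x => rfl
  comp10 := fun x => rfl

theorem LinearMap.exists_comp_eq_of_range_le_of_injective {R M N P : Type*} [Ring R]
    [AddCommGroup M] [AddCommGroup N] [AddCommGroup P] [Module R M] [Module R N] [Module R P]
    {g : M →ₗ[R] N} (hg : Function.Injective g) {f : P →ₗ[R] N} (h : range f ≤ range g) :
    ∃ k : P →ₗ[R] M, g ∘ₗ k = f :=
  ⟨(LinearEquiv.ofInjective g hg).symm.toLinearMap ∘ₗ f.codRestrict _ fun x => h ⟨x, rfl⟩, by
    ext x
    simp⟩

variable {ω σ} (hσ : ∀ a : A, ω * a = σ a * ω)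

namespace MFactHom

def toTheta0 (X : MFact.{u, v} A ω σ) : MFactHom X (theta0 ω σ hσ X.X1) where
  f0 := X.d0
  f1 := LinearMap.id
  comm0 _ := rfl
  comm1 := X.comp10

def ofTheta0 {M : Type v} [AddCommGroup M] [Module A M] (Y : MFact.{u, v} A ω σ)
    (g : M →ₗ[A] Y.X0) : MFactHom (theta0 ω σ hσ M) Y where
  f0 := g
  f1 := Y.d0 ∘ₗ g
  comm0 _ := rfl
  comm1 m := (g.map_smul ω m).trans (Y.comp01 (g m)).symm

end MFactHom

theorem cok0_eq_zero_iff_factors_through_theta0_general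
    {A : Type u} [Ring A] (ω : A) (σ : A ≃+* A)
    (hσ : ∀ a : A, ω * a = σ a * ω)
    (X Y : MFact.{u, v} A ω σ)
    (hX1 : Module.Projective A X.X1)
    (hY0 : Function.Injective Y.d0)
    (f : MFactHom X Y) :
    -- `Cok⁰(f) = 0`, i.e. the image of `f¹` lands in the image of `d⁰_Y`
    (∀ x : X.X1, ∃ y : Y.X0, f.f1 x = Y.d0 y) ↔
    (∃ P : Type v, ∃ (_ : AddCommGroup P) (_ : Module A P), Module.Projective A P ∧
      ∃ (u : MFactHom X (theta0 ω σ hσ P)) (v : MFactHom (theta0 ω σ hσ P) Y),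
        (∀ x : X.X0, f.f0 x = (v.comp u).f0 x) ∧
        (∀ x : X.X1, f.f1 x = (v.comp u).f1 x)) := by
  constructor
  · intro h
    obtain ⟨g, hg⟩ : ∃ g : X.X1 →ₗ[A] Y.X0, Y.d0 ∘ₗ g = f.f1 := by
      refine LinearMap.exists_comp_eq_of_range_le_of_injective hY0 ?_
      rintro _ ⟨x, rfl⟩
      obtain ⟨y, hy⟩ := h x
      exact ⟨y, hy.symm⟩
    refine ⟨X.X1, inferInstance, inferInstance, hX1, .toTheta0 hσ X, .ofTheta0 hσ Y g,
      fun x => hY0 ?_, fun x => (LinearMap.congr_fun hg x).symm⟩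
    calc Y.d0 (f.f0 x) = f.f1 (X.d0 x) := (f.comm0 x).symm
      _ = Y.d0 (g (X.d0 x)) := (LinearMap.congr_fun hg _).symm
  · rintro ⟨P, _, _, _, u, v, -, hf1⟩ x
    exact ⟨v.f0 (u.f1 x), (hf1 x).trans (v.comm0 _)⟩

theorem cok0_eq_zero_iff_factors_through_theta0
    {A : Type u} [Ring A] (ω : A) (σ : A ≃+* A)
    (hσ : ∀ a : A, ω * a = σ a * ω)
    (hreg : ∀ a : A, a * ω = 0 → a = 0) (hreg' : ∀ a : A, ω * a = 0 → a = 0)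
    (X Y : MFact.{u, v} A ω σ)
    (hX1 : Module.Projective A X.X1) (hX0 : Function.Injective X.d0)
    (hY1 : Module.Projective A Y.X1) (hY0 : Function.Injective Y.d0)
    (f : MFactHom X Y) :
    -- `Cok⁰(f) = 0`, i.e. the image of `f¹` lands in the image of `d⁰_Y`
    (∀ x : X.X1, ∃ y : Y.X0, f.f1 x = Y.d0 y) ↔
    (∃ P : Type v, ∃ (_ : AddCommGroup P) (_ : Module A P), Module.Projective A P ∧
      ∃ (u : MFactHom X (theta0 ω σ hσ P)) (v : MFactHom (theta0 ω σ hσ P) Y),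
        (∀ x : X.X0, f.f0 x = (v.comp u).f0 x) ∧
        (∀ x : X.X1, f.f1 x = (v.comp u).f1 x)) :=
  cok0_eq_zero_iff_factors_through_theta0_general ω σ hσ X Y hX1 hY0 f
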